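/- arXiv:1005.3248 — 4 statements merged into one kernel-verified Lean document; each statement's English description precedes it below -/
import Mathlib

section
/- Let 𝒢 be a Grothendieck category and 𝒮 a set of objects of 𝒢. Then there exists a set I of monomorphisms of 𝒢 such that: (a) the class of objects isomorphic to the cokernel of some member of I is exactly the class of objects isomorphic to objects of 𝒮, and (b) for every short exact sequence 0 → A → B → S → 0 with S ∈ 𝒮 there exist a morphism i : A′ → B′ in I and morphisms A′ → A, B′ → B forming a commutative diagram with exact rows 0 → A′ → B′ → S → 0 and 0 → A → B → S → 0 and the identity on S. -/
universe w v u

open CategoryTheory CategoryTheory.Limits Opposite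

namespace Paper

variable {C : Type u} [Category.{v} C]

/-- The linearly ordered (small) category of ordinals `< lam`. -/
abbrev Idx (lam : Ordinal.{w}) : Type (w + 1) := {α : Ordinal.{w} // α < lam}

/-- Morphisms in `Idx lam` from inequalities of the underlying ordinals. -/
def idxLe {lam : Ordinal.{w}} {a b : Idx lam} (h : a.1 ≤ b.1) : a ⟶ b :=
  homOfLE h

/-- The inclusion `Idx γ ⥤ Idx lam` for `γ < lam`. -/
def idxRes {lam γ : Ordinal.{w}} (hγ : γ < lam) : Idx γ ⥤ Idx lam :=
  Monotone.functor (f := fun b => ⟨b.1, b.2.trans hγ⟩) (fun _ _ h => h)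

/-- Given a functor `F : Idx lam ⥤ C` and `γ < lam`, the cocone over the restriction
of `F` to `Idx γ` whose point is `F.obj ⟨γ, hγ⟩`. -/
def restrictCocone {lam γ : Ordinal.{w}} (F : Idx lam ⥤ C) (hγ : γ < lam) :
    Cocone (idxRes hγ ⋙ F) where
  pt := F.obj ⟨γ, hγ⟩
  ι :=
    { app := fun b => F.map (idxLe b.2.le)
      naturality := by
        intro a b f
        dsimp [idxRes]
        rw [Category.comp_id, ← F.map_comp]
        congr 1 }

/-- A functor `F : Idx lam ⥤ C` is a `λ`-sequence if for every limit ordinal `γ < lam`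
the canonical cocone expressing `F.obj γ` as the colimit of the earlier terms is colimiting. -/
structure IsLamSeq {lam : Ordinal.{w}} (F : Idx lam ⥤ C) : Prop where
  smooth : ∀ (γ : Ordinal.{w}) (hγ : γ < lam), Order.IsSuccLimit γ →
    Nonempty (IsColimit (restrictCocone F hγ))

/-- The map `F.obj α ⟶ F.obj (α+1)` of a sequence. -/
def toSucc {lam : Ordinal.{w}} (F : Idx lam ⥤ C) (α : Ordinal.{w})
    (h : Order.succ α < lam) :
    F.obj ⟨α, (Order.lt_succ α).trans h⟩ ⟶ F.obj ⟨Order.succ α, h⟩ :=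
  F.map (idxLe (Order.le_succ α))

/-- All successor maps of the sequence `F` belong to the class of morphisms `M`. -/
def SuccIn {lam : Ordinal.{w}} (F : Idx lam ⥤ C) (M : MorphismProperty C) : Prop :=
  ∀ (α : Ordinal.{w}) (h : Order.succ α < lam), M (toSucc F α h)

/-- `f : X ⟶ Y` is a transfinite composition of morphisms from `M`: there is a
`λ`-sequence starting (up to isomorphism) at `X`, with all successor maps in `M`,
whose colimit exists, such that `f` is (up to isomorphism) the canonical morphism from
`X` to the colimit. -/
def IsTransfiniteCompositionOf (M : MorphismProperty C) : MorphismProperty C := fun X Y f =>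
  ∃ (lam : Ordinal.{w}) (hlam : (0 : Ordinal.{w}) < lam) (F : Idx lam ⥤ C),
    IsLamSeq F ∧ SuccIn F M ∧
      ∃ (c : Cocone F), Nonempty (IsColimit c) ∧
        ∃ (e0 : X ≅ F.obj ⟨0, hlam⟩) (e1 : c.pt ≅ Y),
          f = e0.hom ≫ c.ι.app ⟨0, hlam⟩ ≫ e1.hom

section Abelian

variable [Abelian C]

/-- `Ext¹(S, T) = 0`, expressed via the (Yoneda) description of `Ext¹`: every short
exact sequence `0 ⟶ T ⟶ Z ⟶ S ⟶ 0` splits. -/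
def Ext1IsZero (S T : C) : Prop :=
  ∀ (Z : C) (f : T ⟶ Z) (g : Z ⟶ S) (w : f ≫ g = 0),
    (ShortComplex.mk f g w).ShortExact → ∃ r : Z ⟶ T, f ≫ r = 𝟙 T

/-- The class of monomorphisms whose cokernel is isomorphic to an object of `S`. -/
def MonoCokerIn (S : Set C) : MorphismProperty C := fun _ _ i =>
  Mono i ∧ ∃ Z ∈ S, Nonempty (cokernel i ≅ Z)

/-- `X` is `S`-filtered: the morphism `0 ⟶ X` is the composition of a `λ`-sequence
starting at a zero object, all of whose successor maps are monomorphisms with cokernel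
isomorphic to an object of `S`. -/
def IsFiltObj (S : Set C) (X : C) : Prop :=
  ∃ (lam : Ordinal.{w}) (hlam : (0 : Ordinal.{w}) < lam) (F : Idx lam ⥤ C),
    IsLamSeq F ∧ SuccIn F (MonoCokerIn S) ∧ IsZero (F.obj ⟨0, hlam⟩) ∧
      ∃ (c : Cocone F), Nonempty (IsColimit c) ∧ Nonempty (c.pt ≅ X)

end Abelian

/-!
Fix a generator `G`. For `S` in `𝒮`, each set `U` of maps `G ⟶ S` for which the induced map
`∐_U G ⟶ S` is epi gives the monomorphism `kernel ⟶ ∐_U G` with cokernel `S`; these form a set.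
Given `0 → A → B → S → 0`, take `U` to be the maps `G ⟶ S` that factor through `B`: since `G`
generates and `B ⟶ S` is epi, `∐_U G ⟶ S` is epi, and choosing the factorizations gives
`∐_U G ⟶ B` over `S`, which restricts to `kernel ⟶ A`.
-/

section Coproducts

variable [HasCoproducts.{v} C]

noncomputable def sigmaDescSet {G S : C} (U : Set (G ⟶ S)) : ∐ (fun _ : U => G) ⟶ S :=
  Sigma.desc Subtype.val

lemma epi_sigmaDescSet_range {G B S : C} (hG : IsSeparator G) (g : B ⟶ S) [Epi g] :
    Epi (sigmaDescSet (Set.range fun t : G ⟶ B => t ≫ g)) := by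
  let reindex : ∐ (fun _ : G ⟶ B => G) ⟶ ∐ (fun _ : Set.range fun t : G ⟶ B => t ≫ g => G) :=
    Sigma.desc fun t => Sigma.ι (fun _ : Set.range fun t : G ⟶ B => t ≫ g => G) ⟨t ≫ g, t, rfl⟩
  have hfac : reindex ≫ sigmaDescSet _ = (Sigma.desc fun t : G ⟶ B => t) ≫ g := by
    ext t
    simp [reindex, sigmaDescSet]
  have := (isSeparator_iff_epi G).1 hG B
  have : Epi (reindex ≫ sigmaDescSet _) := hfac ▸ epi_comp _ _
  exact epi_of_epi reindex _

lemma exists_comp_eq_sigmaDescSet_range {G B S : C} (g : B ⟶ S) :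
    ∃ b : ∐ (fun _ : Set.range fun t : G ⟶ B => t ≫ g => G) ⟶ B,
      b ≫ g = sigmaDescSet (Set.range fun t : G ⟶ B => t ≫ g) :=
  ⟨Sigma.desc fun u => u.2.choose, Sigma.hom_ext _ _ fun u => by
    simp [sigmaDescSet, u.2.choose_spec]⟩

end Coproducts

section Abelian

variable [Abelian C]

lemma shortExact_kernelSequence {X Y : C} (f : X ⟶ Y) [Epi f] :
    (ShortComplex.kernelSequence f).ShortExact :=
  .mk' (ShortComplex.kernelSequence_exact f) inferInstance ‹_›

noncomputable def cokernelKernelιIsoOfEpi {X Y : C} (f : X ⟶ Y) [Epi f] :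
    cokernel (kernel.ι f) ≅ Y :=
  (cokernelIsCokernel _).coconePointUniqueUpToIso (shortExact_kernelSequence f).gIsCokernel

end Abelian

-- A Grothendieck category: an abelian category with a separator (generator), with all
-- colimits, in which filtered colimits are exact (AB5).
variable {C : Type u} [Category.{v} C] [Abelian C] [HasColimits C] [AB5 C] [HasSeparator C]

/-- Proposition 2.6(2): in a Grothendieck category, every set `S` of objects admits a
strongly homological set of monomorphisms `I` whose cokernels realize exactly the
isomorphism classes of objects of `S`. -/
theorem exists_strongly_homological_set {ι : Type w} (S : ι → C) :
    ∃ (σ : Type (max w v)) (A B : σ → C) (i : ∀ k, A k ⟶ B k),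
      (∀ k, Mono (i k)) ∧
      (∀ X : C, (∃ k, Nonempty (X ≅ cokernel (i k))) ↔ (∃ j, Nonempty (X ≅ S j))) ∧
      (∀ (j : ι) (A₀ B₀ : C) (f : A₀ ⟶ B₀) (g : B₀ ⟶ S j) (w : f ≫ g = 0),
        (ShortComplex.mk f g w).ShortExact →
        ∃ (k : σ) (q : B k ⟶ S j) (wq : i k ≫ q = 0),
          (ShortComplex.mk (i k) q wq).ShortExact ∧
            ∃ (a : A k ⟶ A₀) (b : B k ⟶ B₀), i k ≫ b = a ≫ f ∧ q = b ≫ g) := by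
  have hG := isSeparator_separator C
  refine ⟨Σ j, {U : Set (separator C ⟶ S j) // Epi (sigmaDescSet U)},
    fun k => kernel (sigmaDescSet k.2.1), fun k => ∐ fun _ : k.2.1 => separator C,
    fun k => kernel.ι _, fun _ => inferInstance, fun X => ⟨?_, ?_⟩, ?_⟩
  · rintro ⟨⟨j, U, hU⟩, ⟨e⟩⟩
    exact ⟨j, ⟨e ≪≫ cokernelKernelιIsoOfEpi _⟩⟩
  · rintro ⟨j, ⟨e⟩⟩
    have hU := epi_sigmaDescSet_range hG (𝟙 (S j))
    exact ⟨⟨j, _, hU⟩, ⟨e ≪≫ (cokernelKernelιIsoOfEpi _).symm⟩⟩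
  · intro j A₀ B₀ f g w hfg
    have := hfg.mono_f
    have := hfg.epi_g
    have hU := epi_sigmaDescSet_range hG g
    obtain ⟨b, hb⟩ := exists_comp_eq_sigmaDescSet_range g
    exact ⟨⟨j, _, hU⟩, _, _, shortExact_kernelSequence _,
      hfg.exact.lift (kernel.ι _ ≫ b) (by simp [hb]), b, (hfg.exact.lift_f _ _).symm, hb.symm⟩

end Paper
end

section
/- Let 𝒢 be a Grothendieck category. Suppose 0 → A → B → F → 0 is a short exact sequence (with monomorphism j : A → B) and (F_α)_{α<λ} is a λ-sequence with F_0 = 0 whose composition is 0 → F (so colim_{α<λ} F_α = F) and whose successor maps i_{α,α+1} : F_α → F_{α+1} are all monomorphisms. Then there exists a λ-sequence (B_α)_{α<λ} with B_0 = A whose composition is exactly j : A → B, such that every successor map m_{α,α+1} : B_α → B_{α+1} is a monomorphism with Coker(m_{α,α+1}) ≅ Coker(i_{α,α+1}) for all α < λ. -/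
universe w v u

open CategoryTheory CategoryTheory.Limits Opposite

namespace Paper

variable {C : Type u} [Category.{v} C]

/-!
Put `B_α := B ×_F F_α`. Base change along the epimorphism `g` preserves monomorphisms, and a
pullback square whose vertical maps are epimorphisms induces an isomorphism on the cokernels of
its horizontal maps, so the successor cokernels do not change; `B_0 = ker g = A` since `F_0 = 0`.

Smoothness and `colim B_α = B` both follow from one fact: the base change of a connected colimit
`colim D` along an epimorphism `B' → colim D` is again a colimit.
Each `E_j → D_j` is an epimorphism with the constant kernel `K = ker (B' → colim D)`. A cocone
`s : E ⟶ T` restricts on `K` to one map `a` (by connectedness). In the pushout `P` of `K → B'`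
along `a`, the differences `E_j → B' → P` minus `E_j → T → P` vanish on `K`, hence descend to a
cocone `D ⟶ P`; its induced map `σ` splits the extension `0 → T → P → colim D → 0`, and the
factorization `B' → T` of `s` is `inl - (B' → colim D) ≫ σ`, which lands in `T`.
-/

universe v₁ u₁ v₂ u₂

section PullbackSquares

variable {𝒜 : Type u₁} [Category.{v₁} 𝒜] [Abelian 𝒜] {P X Y Z : 𝒜}
  {fst : P ⟶ X} {snd : P ⟶ Y} {f : X ⟶ Z} {g : Y ⟶ Z}

theorem epi_snd_of_isPullback (h : IsPullback fst snd f g) [Epi f] : Epi snd :=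
  Abelian.epi_snd_of_isLimit f g h.isLimit

theorem isIso_cokernel_map_of_isPullback (h : IsPullback fst snd f g) [Epi f] :
    IsIso (cokernel.map fst g snd f h.w) := by
  have : Mono (cokernel.map fst g snd f h.w) := Abelian.mono_cokernel_map_of_isPullback h
  have : Epi (cokernel.map fst g snd f h.w) :=
    epi_of_epi_fac (cokernel.π_desc fst (f ≫ cokernel.π g) _)
  exact isIso_of_mono_of_epi _

theorem exists_snd_comp_eq_of_isPullback (h : IsPullback fst snd f g) [Epi f]
    {k : kernel f ⟶ P} (hk₁ : k ≫ fst = kernel.ι f) (hk₂ : k ≫ snd = 0)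
    {W : 𝒜} {x : P ⟶ W} (hx : k ≫ x = 0) : ∃ y : Y ⟶ W, snd ≫ y = x := by
  have := epi_snd_of_isPullback h
  have hker : kernel.lift f (kernel.ι snd ≫ fst) (by simp [h.w]) ≫ k = kernel.ι snd :=
    h.hom_ext (by simp [hk₁]) (by simp [hk₂])
  exact ⟨Abelian.epiDesc snd x (by rw [← hker, Category.assoc, hx, comp_zero]),
    Abelian.comp_epiDesc _ _ _⟩

noncomputable def isLimitKernelForkOfIsPullback (h : IsPullback fst snd f g) (hY : IsZero Y) :
    IsLimit (KernelFork.ofι fst (by rw [h.w, hY.eq_of_tgt snd 0, zero_comp]) : KernelFork f) :=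
  KernelFork.IsLimit.ofι _ _ (fun x hx => h.lift x 0 (by simp [hx]))
    (fun _ _ => h.lift_fst _ _ _)
    (fun _ _ _ hm => h.hom_ext (by simpa using hm) (hY.eq_of_tgt _ _))

end PullbackSquares

section PushoutExtension

variable {𝒜 : Type u₁} [Category.{v₁} 𝒜] [Abelian 𝒜] {X Z T : 𝒜} (g : X ⟶ Z) [Epi g]
  (a : kernel g ⟶ T)

theorem exists_comp_pushout_inr_eq {W : 𝒜} {y : W ⟶ pushout (kernel.ι g) a}
    (hy : y ≫ (pushout.desc g 0 (by simp) : pushout (kernel.ι g) a ⟶ Z) = 0) :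
    ∃ z : W ⟶ T, z ≫ pushout.inr _ _ = y := by
  have := epi_of_epi_fac (pushout.inl_desc g (0 : T ⟶ Z) (by simp : kernel.ι g ≫ g = a ≫ 0))
  have hπ : IsColimit (CokernelCofork.ofπ
      (pushout.desc g 0 (by simp) : pushout (kernel.ι g) a ⟶ Z) (pushout.inr_desc _ _ _)) := by
    refine CokernelCofork.IsColimit.ofπ' _ _ fun {W} x hx => ?_
    have hker : kernel.ι g ≫ pushout.inl _ _ ≫ x = 0 := by
      rw [pushout.condition_assoc, hx, comp_zero]
    refine ⟨Abelian.epiDesc g _ hker, pushout.hom_ext ?_ ?_⟩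
    · rw [pushout.inl_desc_assoc, Abelian.comp_epiDesc]
    · rw [pushout.inr_desc_assoc, zero_comp, hx]
  exact ⟨_, (KernelFork.IsLimit.lift' (Abelian.monoIsKernelOfCokernel _ hπ) y hy).2⟩

end PushoutExtension

section BaseChangeOfColimits

variable {𝒜 : Type u₁} [Category.{v₁} 𝒜] [Abelian 𝒜] {J : Type u₂} [Category.{v₂} J]
  {D E : J ⥤ 𝒜} {c : Cocone D} {t : Cocone E} {p : E ⟶ D} {g : t.pt ⟶ c.pt}

noncomputable def kernelLift (hsq : ∀ j, IsPullback (t.ι.app j) (p.app j) g (c.ι.app j))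
    (j : J) : kernel g ⟶ E.obj j :=
  (hsq j).lift (kernel.ι g) 0 (by simp)

theorem kernelLift_comp_ι (hsq : ∀ j, IsPullback (t.ι.app j) (p.app j) g (c.ι.app j)) (j : J) :
    kernelLift hsq j ≫ t.ι.app j = kernel.ι g :=
  (hsq j).lift_fst _ _ _

theorem kernelLift_comp_app (hsq : ∀ j, IsPullback (t.ι.app j) (p.app j) g (c.ι.app j)) (j : J) :
    kernelLift hsq j ≫ p.app j = 0 :=
  (hsq j).lift_snd _ _ _

theorem kernelLift_comp_map (hsq : ∀ j, IsPullback (t.ι.app j) (p.app j) g (c.ι.app j)) {i j : J}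
    (φ : i ⟶ j) : kernelLift hsq i ≫ E.map φ = kernelLift hsq j :=
  (hsq j).hom_ext (by rw [Category.assoc, t.w, kernelLift_comp_ι, kernelLift_comp_ι])
    (by rw [Category.assoc, p.naturality, ← Category.assoc, kernelLift_comp_app, zero_comp,
      kernelLift_comp_app])

theorem kernelLift_comp_ι_eq [IsPreconnected J]
    (hsq : ∀ j, IsPullback (t.ι.app j) (p.app j) g (c.ι.app j)) (s : Cocone E) (i j : J) :
    kernelLift hsq i ≫ s.ι.app i = kernelLift hsq j ≫ s.ι.app j :=
  constant_of_preserves_morphisms (fun j => kernelLift hsq j ≫ s.ι.app j)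
    (fun _ _ φ => by rw [← s.w φ, ← Category.assoc, kernelLift_comp_map]) i j

theorem hom_ext_of_isPullback [Nonempty J] [Epi g]
    (hsq : ∀ j, IsPullback (t.ι.app j) (p.app j) g (c.ι.app j)) (hc : IsColimit c) {T : 𝒜}
    {u v : t.pt ⟶ T} (h : ∀ j, t.ι.app j ≫ u = t.ι.app j ≫ v) : u = v := by
  let j₀ := Classical.arbitrary J
  have hker : kernel.ι g ≫ (u - v) = 0 := by
    rw [← kernelLift_comp_ι hsq j₀, Category.assoc, Preadditive.comp_sub, h, sub_self, comp_zero]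
  have hdesc : Abelian.epiDesc g (u - v) hker = 0 := hc.hom_ext fun j => by
    have := epi_snd_of_isPullback (hsq j)
    rw [← cancel_epi (p.app j), ← (hsq j).w_assoc, Abelian.comp_epiDesc, Preadditive.comp_sub,
      h, sub_self, comp_zero, comp_zero]
  rw [← sub_eq_zero, ← Abelian.comp_epiDesc g (u - v) hker, hdesc, comp_zero]

theorem exists_desc_pushout_of_isPullback [Epi g]
    (hsq : ∀ j, IsPullback (t.ι.app j) (p.app j) g (c.ι.app j)) (hc : IsColimit c)
    (s : Cocone E) {a : kernel g ⟶ s.pt} (ha : ∀ j, kernelLift hsq j ≫ s.ι.app j = a) :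
    ∃ σ : c.pt ⟶ pushout (kernel.ι g) a, ∀ j,
      p.app j ≫ c.ι.app j ≫ σ = t.ι.app j ≫ pushout.inl _ _ - s.ι.app j ≫ pushout.inr _ _ := by
  have := fun j => epi_snd_of_isPullback (hsq j)
  choose e he using fun j => exists_snd_comp_eq_of_isPullback (hsq j) (kernelLift_comp_ι hsq j)
    (kernelLift_comp_app hsq j)
    (x := t.ι.app j ≫ pushout.inl _ _ - s.ι.app j ≫ pushout.inr (kernel.ι g) a)
    (by rw [Preadditive.comp_sub, ← Category.assoc, kernelLift_comp_ι, ← Category.assoc, ha,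
      pushout.condition, sub_self])
  have he_nat : ∀ {i j : J} (φ : i ⟶ j), D.map φ ≫ e j = e i := fun {i j} φ => by
    rw [← cancel_epi (p.app i), ← Category.assoc, ← p.naturality, Category.assoc, he, he,
      Preadditive.comp_sub, ← Category.assoc, t.w, ← Category.assoc, s.w]
  refine ⟨hc.desc (Cocone.mk (pushout (kernel.ι g) a) { app := e, naturality := fun _ _ φ => ?_ }),
    fun j => ?_⟩
  · simpa using he_nat φ
  · rw [hc.fac, he]

theorem exists_desc_of_isPullback [IsConnected J] [Epi g]
    (hsq : ∀ j, IsPullback (t.ι.app j) (p.app j) g (c.ι.app j)) (hc : IsColimit c)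
    (s : Cocone E) : ∃ u : t.pt ⟶ s.pt, ∀ j, t.ι.app j ≫ u = s.ι.app j := by
  have := fun j => epi_snd_of_isPullback (hsq j)
  obtain ⟨a, ha⟩ : ∃ a, ∀ j, kernelLift hsq j ≫ s.ι.app j = a :=
    ⟨kernelLift hsq (Classical.arbitrary J) ≫ s.ι.app _,
      fun j => kernelLift_comp_ι_eq hsq s j (Classical.arbitrary J)⟩
  obtain ⟨σ, hσ⟩ := exists_desc_pushout_of_isPullback hsq hc s ha
  have hsplit : σ ≫ (pushout.desc g 0 (by simp) : pushout (kernel.ι g) a ⟶ c.pt) = 𝟙 c.pt :=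
    hc.hom_ext fun j => by
      rw [← cancel_epi (p.app j), ← Category.assoc (c.ι.app j), ← Category.assoc (p.app j), hσ,
        Preadditive.sub_comp, Category.assoc, Category.assoc, pushout.inl_desc,
        pushout.inr_desc, comp_zero, sub_zero, (hsq j).w, Category.comp_id]
  obtain ⟨u, hu⟩ := exists_comp_pushout_inr_eq g a (y := pushout.inl _ _ - g ≫ σ) (by
    rw [Preadditive.sub_comp, Category.assoc, hsplit, pushout.inl_desc, Category.comp_id,
      sub_self])
  refine ⟨u, fun j => ?_⟩
  rw [← cancel_mono (pushout.inr (kernel.ι g) a), Category.assoc, hu, Preadditive.comp_sub,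
    ← Category.assoc, (hsq j).w, Category.assoc, hσ, sub_sub_cancel]

noncomputable def isColimitOfIsPullback [IsConnected J] [hg : Epi g]
    (hsq : ∀ j, IsPullback (t.ι.app j) (p.app j) g (c.ι.app j)) (hc : IsColimit c) :
    IsColimit t :=
  IsColimit.ofExistsUnique fun s =>
    let ⟨u, hu⟩ := exists_desc_of_isPullback hsq hc s
    ⟨u, hu, fun _ hv => hom_ext_of_isPullback hsq hc fun j => by rw [hv, hu]⟩

end BaseChangeOfColimits

section BaseChange

variable {𝒜 : Type u₁} [Category.{v₁} 𝒜] [Abelian 𝒜] {J : Type u₂} [Category.{v₂} J]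
  {F : J ⥤ 𝒜} (c : Cocone F) {B : 𝒜} (g : B ⟶ c.pt)

noncomputable abbrev baseChange : J ⥤ 𝒜 :=
  pullback c.ι ((Functor.const J).map g)

noncomputable abbrev baseChangeCocone : Cocone (baseChange c g) :=
  Cocone.mk B (pullback.snd c.ι ((Functor.const J).map g))

theorem isPullback_baseChange_app (j : J) :
    IsPullback ((baseChangeCocone c g).ι.app j) ((pullback.fst c.ι _).app j) g (c.ι.app j) :=
  ((IsPullback.of_hasPullback c.ι ((Functor.const J).map g)).app j).flip

theorem isPullback_baseChange_map {i j : J} (φ : i ⟶ j) :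
    IsPullback ((baseChange c g).map φ) ((pullback.fst c.ι _).app i)
      ((pullback.fst c.ι _).app j) (F.map φ) :=
  IsPullback.of_right (by simpa using isPullback_baseChange_app c g i)
    ((pullback.fst c.ι _).naturality φ) (isPullback_baseChange_app c g j)

end BaseChange

theorem isConnected_idx {lam : Ordinal.{w}} (hlam : 0 < lam) : IsConnected (Idx lam) :=
  have : Nonempty (Idx lam) := ⟨⟨0, hlam⟩⟩
  IsFiltered.isConnected _

-- A Grothendieck category: an abelian category with a separator (generator), with all
-- colimits, in which filtered colimits are exact (AB5).
variable {C : Type u} [Category.{v} C] [Abelian C] [HasColimits C] [AB5 C] [HasSeparator C]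

/-- Lemma 2.10 (refining filtrations): given a short exact sequence
`0 → A → B → F → 0` and a `λ`-sequence `(F_α)` with `F_0 = 0`, monomorphic successor
maps and colimit `F`, there is a `λ`-sequence `(B_α)` with `B_0 = A`, composition `j`,
monomorphic successor maps, and the same successor cokernels (up to isomorphism). -/
theorem refine_filtration {lam : Ordinal.{w}} (hlam : (0 : Ordinal.{w}) < lam)
    (Fs : Idx lam ⥤ C) (hFs : IsLamSeq Fs)
    (hmono : ∀ (α : Ordinal.{w}) (h : Order.succ α < lam), Mono (toSucc Fs α h))
    (h0 : IsZero (Fs.obj ⟨0, hlam⟩))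
    (cF : Cocone Fs) (hcF : IsColimit cF)
    {A B : C} (j : A ⟶ B) (g : B ⟶ cF.pt) (w : j ≫ g = 0)
    (hse : (ShortComplex.mk j g w).ShortExact) :
    ∃ Bs : Idx lam ⥤ C, IsLamSeq Bs ∧
      (∀ (α : Ordinal.{w}) (h : Order.succ α < lam), Mono (toSucc Bs α h) ∧
        Nonempty (cokernel (toSucc Bs α h) ≅ cokernel (toSucc Fs α h))) ∧
      ∃ cB : Cocone Bs, Nonempty (IsColimit cB) ∧
        ∃ (e0 : A ≅ Bs.obj ⟨0, hlam⟩) (e1 : cB.pt ≅ B),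
          j = e0.hom ≫ cB.ι.app ⟨0, hlam⟩ ≫ e1.hom := by
  have := hse.epi_g
  have := isConnected_idx hlam
  have hepi : ∀ α, Epi ((pullback.fst cF.ι ((Functor.const _).map g)).app α) :=
    fun α => epi_snd_of_isPullback (isPullback_baseChange_app cF g α)
  refine ⟨baseChange cF g, ⟨fun γ hγ hlim => ?_⟩, fun α h => ?_, baseChangeCocone cF g,
    ⟨isColimitOfIsPullback (isPullback_baseChange_app cF g) hcF⟩, ?_⟩
  · have := isConnected_idx hlim.bot_lt
    obtain ⟨hcγ⟩ := hFs.smooth γ hγ hlim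
    exact ⟨isColimitOfIsPullback (c := restrictCocone Fs hγ) (hg := hepi ⟨γ, hγ⟩)
      (p := Functor.whiskerLeft (idxRes hγ) (pullback.fst _ _))
      (fun b => isPullback_baseChange_map cF g (i := (idxRes hγ).obj b) (j := ⟨γ, hγ⟩)
        (idxLe b.2.le)) hcγ⟩
  · have hsq := isPullback_baseChange_map cF g (i := ⟨α, (Order.lt_succ α).trans h⟩)
      (j := ⟨Order.succ α, h⟩) (idxLe (Order.le_succ α))
    have := hepi ⟨Order.succ α, h⟩
    exact ⟨hsq.mono_fst_of_mono (hmono α h),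
      ⟨@asIso _ _ _ _ _ (isIso_cokernel_map_of_isPullback hsq)⟩⟩
  · have hker := isLimitKernelForkOfIsPullback (isPullback_baseChange_app cF g ⟨0, hlam⟩) h0
    refine ⟨hse.fIsKernel.conePointUniqueUpToIso hker, Iso.refl B, ?_⟩
    simpa using (hse.fIsKernel.conePointUniqueUpToIso_hom_comp hker WalkingParallelPair.zero).symm

end Paper
end

section
/- (Eklof Lemma) Let 𝒢 be a Grothendieck category. Suppose (X_α)_{α<λ} is a λ-sequence with X_0 = 0 whose composition is 0 → X (so X = colim_{α<λ} X_α) and whose successor maps i_{α,α+1} : X_α → X_{α+1} are all monomorphisms. If Y is an object of 𝒢 such that Ext¹(Coker(i_{α,α+1}), Y) = 0 for every α < λ, then Ext¹(X, Y) = 0. -/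
/-!
To show `Ext¹(X, Y) = 0`, take an extension `0 → Y → Z →g X → 0` and look for a section of `g`.
For a monomorphism `i : A → B` with `Ext¹(Coker i, Y) = 0`, every square from `i` to `g` has a
lift: pulling the extension back along `B → X` reduces this to extending a partial section over
`A` of an extension of `B` by `Y`, and the obstruction is an extension of `Coker i` by `Y`,
which splits. Left lifting properties are stable under transfinite composition, so `0 → X`
lifts against `g` as well.
-/

universe w v u

open CategoryTheory CategoryTheory.Limits Opposite

namespace Paper

variable {C : Type u} [Category.{v} C]

section Lifting

variable [Abelian C]

lemma shortExact_pullback {Y Z X B : C} {f : Y ⟶ Z} {g : Z ⟶ X} {w : f ≫ g = 0}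
    (hS : (ShortComplex.mk f g w).ShortExact) (v : B ⟶ X) :
    (ShortComplex.mk (pullback.lift f 0 (by simp [w])) (pullback.snd g v)
      (pullback.lift_snd _ _ _)).ShortExact := by
  have := hS.mono_f
  have := hS.epi_g
  refine .mk' ?_ (mono_of_mono_fac (pullback.lift_fst _ _ _)) inferInstance
  rw [ShortComplex.exact_iff_exact_up_to_refinements]
  intro T x hx
  obtain ⟨y, hy⟩ : ∃ y, y ≫ f = x ≫ pullback.fst g v :=
    ⟨_, hS.exact.lift_f _ (by simpa [pullback.condition] using hx =≫ v)⟩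
  refine ⟨T, 𝟙 T, inferInstance, y, ?_⟩
  dsimp at hx ⊢
  apply pullback.hom_ext
  · simp only [Category.assoc, pullback.lift_fst, Category.id_comp, hy]
  · simp only [Category.assoc, pullback.lift_snd, Category.id_comp, hx, comp_zero]

lemma shortExact_cokernel_desc {Y P A B : C} {f : Y ⟶ P} {p : P ⟶ B} {w : f ≫ p = 0}
    (hS : (ShortComplex.mk f p w).ShortExact) {i : A ⟶ B} [Mono i] {q : A ⟶ P}
    (hq : q ≫ p = i) :
    (ShortComplex.mk (f ≫ cokernel.π q)
      (cokernel.desc q (p ≫ cokernel.π i) (by simp [reassoc_of% hq]))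
      (by simp [reassoc_of% w])).ShortExact := by
  have := hS.mono_f
  have := hS.epi_g
  have : Mono q := mono_of_mono_fac hq
  have hq_exact : (ShortComplex.mk q (cokernel.π q) (cokernel.condition q)).Exact :=
    ShortComplex.exact_of_g_is_cokernel _ (cokernelIsCokernel q)
  have hi_exact : (ShortComplex.mk i (cokernel.π i) (cokernel.condition i)).Exact :=
    ShortComplex.exact_of_g_is_cokernel _ (cokernelIsCokernel i)
  refine .mk' ?_ ?_ (epi_of_epi_fac (cokernel.π_desc _ _ _))
  · rw [ShortComplex.exact_iff_exact_up_to_refinements]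
    intro T x hx
    obtain ⟨T', π, _, x', hx'⟩ := surjective_up_to_refinements_of_epi (cokernel.π q) x
    have hx'' : x' ≫ p ≫ cokernel.π i = 0 := by
      simpa only [reassoc_of% hx', cokernel.π_desc, comp_zero] using π ≫= hx
    obtain ⟨a, ha⟩ : ∃ a, a ≫ i = x' ≫ p :=
      ⟨_, hi_exact.lift_f _ (by simpa only [Category.assoc] using hx'')⟩
    obtain ⟨b, hb⟩ : ∃ b, b ≫ f = x' - a ≫ q :=
      ⟨_, hS.exact.lift_f _ (by simp [hq, ha])⟩
    refine ⟨T', π, inferInstance, b, ?_⟩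
    dsimp
    rw [hx', ← Category.assoc b, hb, Preadditive.sub_comp, Category.assoc, cokernel.condition,
      comp_zero, sub_zero]
  · refine Preadditive.mono_of_cancel_zero _ fun {T} t ht => ?_
    obtain ⟨l, hl⟩ : ∃ l, l ≫ q = t ≫ f := ⟨_, hq_exact.lift_f _ (by simpa using ht)⟩
    have hl0 : l = 0 := by
      rw [← cancel_mono i, ← hq, reassoc_of% hl, w, comp_zero, zero_comp]
    rw [← cancel_mono f, ← hl, hl0]
    simp

lemma exists_section_extending {Y P A B : C} {f : Y ⟶ P} {p : P ⟶ B} {w : f ≫ p = 0}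
    (hS : (ShortComplex.mk f p w).ShortExact) {i : A ⟶ B} [Mono i]
    (hY : Ext1IsZero (cokernel i) Y) (q : A ⟶ P) (hq : q ≫ p = i) :
    ∃ σ : B ⟶ P, i ≫ σ = q ∧ σ ≫ p = 𝟙 B := by
  -- a retraction of `f` that vanishes on `q`
  obtain ⟨r, hr⟩ := hY _ _ _ _ (shortExact_cokernel_desc hS hq)
  let σ := ShortComplex.Splitting.ofExactOfRetraction _ hS.exact (cokernel.π q ≫ r)
    (by simpa only [Category.assoc] using hr) hS.epi_g
  refine ⟨σ.s, ?_, σ.s_g⟩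
  calc i ≫ σ.s = q ≫ (cokernel.π q ≫ r) ≫ f + q ≫ p ≫ σ.s := by
        rw [← hq]; simp
    _ = q := by rw [← Preadditive.comp_add]; exact (q ≫= σ.id).trans (Category.comp_id q)

lemma hasLiftingProperty_of_ext1IsZero {A B Y Z X : C} (i : A ⟶ B) [Mono i]
    (hY : Ext1IsZero (cokernel i) Y) {f : Y ⟶ Z} {g : Z ⟶ X} {w : f ≫ g = 0}
    (hS : (ShortComplex.mk f g w).ShortExact) : HasLiftingProperty i g where
  sq_hasLift {u v} sq := by
    obtain ⟨σ, hiσ, hσ⟩ := exists_section_extending (shortExact_pullback hS v) hY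
      (pullback.lift u i sq.w) (pullback.lift_snd _ _ _)
    exact ⟨⟨{ l := σ ≫ pullback.fst g v
              fac_left := by rw [reassoc_of% hiσ, pullback.lift_fst]
              fac_right := by rw [Category.assoc, pullback.condition, reassoc_of% hσ] }⟩⟩

end Lifting

section Sequence

variable {lam : Ordinal.{w}}

noncomputable instance : SuccOrder (Idx lam) := inferInstanceAs (SuccOrder (Set.Iio lam))

instance : WellFoundedLT (Idx lam) := inferInstanceAs (WellFoundedLT (Set.Iio lam))

abbrev Idx.orderBot (hlam : 0 < lam) : OrderBot (Idx lam) where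
  bot := ⟨0, hlam⟩
  bot_le _ := Subtype.mk_le_mk.2 zero_le

lemma Idx.isSuccLimit_iff (a : Idx lam) : Order.IsSuccLimit a ↔ Order.IsSuccLimit a.1 :=
  ((Set.principalSegIio lam).isSuccLimit_apply_iff (a := a)).symm

lemma Idx.succ_lt_of_not_isMax {a : Idx lam} (ha : ¬IsMax a) : Order.succ a.1 < lam :=
  not_not.1 fun h => ha (isMax_of_succ_notMem (s := Set.Iio lam) h)

lemma Idx.coe_succ_of_lt {a : Idx lam} (h : Order.succ a.1 < lam) :
    (Order.succ a).1 = Order.succ a.1 :=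
  coe_succ_of_mem (s := Set.Iio lam) h

def Idx.isoIio (m : Idx lam) : Idx m.1 ≃o Set.Iio m where
  toFun b := ⟨⟨b.1, b.2.trans m.2⟩, b.2⟩
  invFun b := ⟨b.1.1, b.2⟩
  left_inv _ := rfl
  right_inv _ := rfl
  map_rel_iff' := Iff.rfl

lemma IsLamSeq.isWellOrderContinuous {F : Idx lam ⥤ C} (hF : IsLamSeq F) :
    F.IsWellOrderContinuous where
  nonempty_isColimit m hm := by
    obtain ⟨h⟩ := hF.smooth m.1 m.2 ((Idx.isSuccLimit_iff m).1 hm)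
    exact ⟨IsColimit.ofWhiskerEquivalence (Idx.isoIio m).equivalence h⟩

lemma map_succ_mem {F : Idx lam ⥤ C} {P : MorphismProperty C} (hF : SuccIn F P) {j : Idx lam}
    (hj : ¬IsMax j) : P (F.map (homOfLE (Order.le_succ j))) := by
  suffices ∀ (k : Idx lam) (hjk : j ≤ k), k.1 = Order.succ j.1 → P (F.map (homOfLE hjk)) from
    this _ _ (Idx.coe_succ_of_lt (Idx.succ_lt_of_not_isMax hj))
  rintro ⟨k, hk⟩ hjk rfl
  exact hF j.1 hk

end Sequence

-- A Grothendieck category: an abelian category with a separator (generator), with all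
-- colimits, in which filtered colimits are exact (AB5).
variable {C : Type u} [Category.{v} C] [Abelian C] [HasColimits C] [AB5 C] [HasSeparator C]

/-- Proposition 2.12 (the Eklof lemma): if `(X_α)` is a `λ`-sequence with `X_0 = 0`,
monomorphic successor maps and colimit `X`, and `Ext¹(Coker(i_{α,α+1}), Y) = 0` for
every `α`, then `Ext¹(X, Y) = 0`. -/
theorem eklof_lemma {lam : Ordinal.{w}} (hlam : (0 : Ordinal.{w}) < lam)
    (F : Idx lam ⥤ C) (hF : IsLamSeq F)
    (h0 : IsZero (F.obj ⟨0, hlam⟩))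
    (hmono : ∀ (α : Ordinal.{w}) (h : Order.succ α < lam), Mono (toSucc F α h))
    (c : Cocone F) (hc : IsColimit c)
    (Y : C)
    (hY : ∀ (α : Ordinal.{w}) (h : Order.succ α < lam),
      Ext1IsZero (cokernel (toSucc F α h)) Y) :
    Ext1IsZero c.pt Y := by
  let _ := Idx.orderBot hlam
  have := hF.isWellOrderContinuous
  intro Z f g w hS
  have hsucc : SuccIn F fun _ _ i => HasLiftingProperty i g := fun α h =>
    have := hmono α h
    hasLiftingProperty_of_ext1IsZero _ (hY α h) hS
  have : HasLiftingProperty (c.ι.app ⊥) g :=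
    HasLiftingProperty.transfiniteComposition.hasLiftingProperty_ι_app_bot hc
      fun _ hj => map_succ_mem hsucc hj
  have sq : CommSq (0 : F.obj ⊥ ⟶ Z) (c.ι.app ⊥) g (𝟙 c.pt) := ⟨h0.eq_of_src _ _⟩
  let σ := ShortComplex.Splitting.ofExactOfSection _ hS.exact sq.lift sq.fac_right hS.mono_f
  exact ⟨σ.r, σ.f_r⟩

end Paper
end

section
/- Let 𝒟 be a triangulated category in which idempotents split, and let 𝒳 ⊆ 𝒟 be a full subcategory which is suspended (closed under extensions and direct summands, and with 𝒳[1] ⊆ 𝒳) and precovering. Then the inclusion functor 𝒳 ↪ 𝒟 has a right adjoint. Moreover, for every object M of 𝒟 there is a distinguished triangle X → M → Y → X[1] with X ∈ 𝒳 and Y ∈ 𝒳^⊥, where 𝒳^⊥ = {Y : Hom(X′, Y) = 0 for all X′ ∈ 𝒳}; that is, (𝒳, 𝒳^⊥) satisfies the axioms of a t-structure (up to shift). -/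
/-!
Take an `𝒳`-precover `f : X₀ ⟶ M` and complete it to a triangle `X₀ ⟶ M ⟶ Y ⟶ X₀⟦1⟧`.
A Wakamatsu-type argument, using that `𝒳` is closed under extensions, shows that every map
from `𝒳` to `Y` factors through its composite with `δ : Y ⟶ X₀⟦1⟧`; together with a precover
of `Y` this yields an idempotent `e` of `Y`, factoring through `δ`, that fixes every map from
`𝒳`. The summand `Y₁` of `Y` cut out by `𝟙 - e` lies in `𝒳^⊥`, and comparing the triangle
on `M ⟶ Y₁` with the original one exhibits its first vertex as a summand of `X₀`, hence in `𝒳`.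
Such triangles make `X ⟶ M` an `𝒳`-coreflection of `M`, which gives the right adjoint.
-/

universe v u

open CategoryTheory CategoryTheory.Limits CategoryTheory.Pretriangulated

namespace CategoryTheory

lemma IsIdempotentComplete.exists_retract_comp_eq_id_sub {C : Type u} [Category.{v} C]
    [Preadditive C] [IsIdempotentComplete C] {Y : C} {e : Y ⟶ Y} (he : e ≫ e = e) :
    ∃ (Y₁ : C) (ρ : Retract Y₁ Y), ρ.r ≫ ρ.i = 𝟙 Y - e := by
  have hidem : (𝟙 Y - e) ≫ (𝟙 Y - e) = 𝟙 Y - e := by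
    simp only [Preadditive.comp_sub, Preadditive.sub_comp, Category.id_comp, Category.comp_id, he]
    abel
  obtain ⟨Y₁, i, r, hir, hri⟩ := IsIdempotentComplete.idempotents_split Y _ hidem
  exact ⟨Y₁, ⟨i, r, hir⟩, hri⟩

namespace ObjectProperty

section

variable {C : Type u} [Category.{v} C] (P : ObjectProperty C)

def IsPrecover {X M : C} (f : X ⟶ M) : Prop :=
  P X ∧ ∀ ⦃X' : C⦄, P X' → ∀ g : X' ⟶ M, ∃ h : X' ⟶ X, h ≫ f = g

def IsPrecovering : Prop :=
  ∀ M : C, ∃ (X : C) (f : X ⟶ M), P.IsPrecover f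

variable {P}

lemma isLeftAdjoint_ι_of_bijective
    (h : ∀ M : C, ∃ (X : C) (_ : P X) (f : X ⟶ M),
      ∀ ⦃X' : C⦄, P X' → Function.Bijective (fun u : X' ⟶ X => u ≫ f)) :
    P.ι.IsLeftAdjoint := by
  refine Functor.isLeftAdjoint_of_rightAdjointObjIsDefined_eq_top (top_le_iff.1 fun M _ => ?_)
  obtain ⟨X, hX, f, hf⟩ := h M
  let e : (P.ι.op ⋙ yoneda.obj M).RepresentableBy (⟨X, hX⟩ : P.FullSubcategory) :=
    { homEquiv := fun {A} => P.fullyFaithfulι.homEquiv.trans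
        (Equiv.ofBijective (fun u : A.obj ⟶ X => u ≫ f) (hf A.property))
      homEquiv_comp := fun _ _ => by simp [Functor.FullyFaithful.homEquiv] }
  exact e.isRepresentable

lemma rightOrthogonal_of_retract [Preadditive C] {Y Y₁ : C} (ρ : Retract Y₁ Y) {e : Y ⟶ Y}
    (he : ∀ ⦃X' : C⦄, P X' → ∀ φ : X' ⟶ Y, φ ≫ e = φ) (hρ : ρ.r ≫ ρ.i = 𝟙 Y - e) :
    P.rightOrthogonal Y₁ := by
  intro X' φ hX'
  have hφi : φ ≫ ρ.i = 0 := by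
    calc φ ≫ ρ.i = φ ≫ ρ.i ≫ ρ.r ≫ ρ.i := by rw [ρ.retract_assoc]
      _ = 0 := by
        rw [hρ, Preadditive.comp_sub, Category.comp_id, Preadditive.comp_sub, ← Category.assoc,
          he hX', sub_self]
  simpa using hφi =≫ ρ.r

end

end ObjectProperty

variable {C : Type u} [Category.{v} C] [HasZeroObject C] [HasShift C ℤ] [Preadditive C]
  [∀ n : ℤ, (shiftFunctor C n).Additive] [Pretriangulated C]

namespace Pretriangulated

lemma nonempty_retract_obj₁ {X₀ X M Y Y₁ : C} {f : X₀ ⟶ M} {g : M ⟶ Y} {δ : Y ⟶ X₀⟦(1 : ℤ)⟧}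
    {a : X ⟶ M} {c : Y₁ ⟶ X⟦(1 : ℤ)⟧} (ρ : Retract Y₁ Y)
    (hT : Triangle.mk f g δ ∈ distTriang C) (hT₁ : Triangle.mk a (g ≫ ρ.r) c ∈ distTriang C)
    (hg : g ≫ ρ.r ≫ ρ.i = g) : Nonempty (Retract X X₀) := by
  have comm₁ : (g ≫ ρ.r) ≫ ρ.i = 𝟙 M ≫ g := by rw [Category.assoc, hg, Category.id_comp]
  have comm₂ : g ≫ ρ.r = 𝟙 M ≫ g ≫ ρ.r := (Category.id_comp _).symm
  obtain ⟨u, hu₁, hu₂⟩ := complete_distinguished_triangle_morphism₁ _ _ hT₁ hT (𝟙 M) ρ.i comm₁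
  obtain ⟨v, hv₁, hv₂⟩ := complete_distinguished_triangle_morphism₁ _ _ hT hT₁ (𝟙 M) ρ.r comm₂
  let φ : Triangle.mk a (g ≫ ρ.r) c ⟶ Triangle.mk f g δ :=
    Triangle.homMk _ _ u (𝟙 M) ρ.i hu₁ comm₁ hu₂
  let ψ : Triangle.mk f g δ ⟶ Triangle.mk a (g ≫ ρ.r) c :=
    Triangle.homMk _ _ v (𝟙 M) ρ.r hv₁ comm₂ hv₂
  obtain ⟨w, hw, -⟩ := (isIso₁_of_isIso₂₃ (φ ≫ ψ) hT₁ hT₁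
    (show IsIso (𝟙 M ≫ 𝟙 M) by infer_instance)
    (show IsIso (ρ.i ≫ ρ.r) by rw [ρ.retract]; infer_instance)).out
  exact ⟨⟨u, v ≫ w, (Category.assoc _ _ _).symm.trans hw⟩⟩

end Pretriangulated

namespace ObjectProperty

variable (P : ObjectProperty C)

instance [P.IsStableUnderShiftBy (1 : ℤ)] : P.rightOrthogonal.IsStableUnderShiftBy (-1 : ℤ) where
  le_shift Y hY X f hX := by
    obtain ⟨g, rfl⟩ := ((shiftEquiv C (1 : ℤ)).toAdjunction.homEquiv X Y).surjective f
    simp [hY g (P.le_shift 1 X hX), Adjunction.homEquiv_unit]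
    rfl

variable {P}

/-- The triangulated Wakamatsu lemma. -/
lemma IsPrecover.exists_comp_eq_of_distTriang [P.IsClosedUnderIsomorphisms]
    [P.IsTriangulatedClosed₂] {X M Y : C} {f : X ⟶ M} {g : M ⟶ Y} {δ : Y ⟶ X⟦(1 : ℤ)⟧}
    (hT : Triangle.mk f g δ ∈ distTriang C) (hf : P.IsPrecover f) {X' : C} (hX' : P X')
    (φ : X' ⟶ Y) : ∃ ψ : X⟦(1 : ℤ)⟧ ⟶ Y, φ ≫ δ ≫ ψ = φ := by
  obtain ⟨E, b, c, hTE⟩ := distinguished_cocone_triangle₁ (φ ≫ δ)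
  have hE : P E := P.ext_of_isTriangulatedClosed₂ _ (inv_rot_of_distTriang _ hTE)
    (P.prop_of_iso ((shiftFunctorCompIsoId C (1 : ℤ) (-1) (by norm_num)).app _).symm hf.1) hX'
  have hbφ : b ≫ φ = 0 := by
    obtain ⟨m, hm⟩ := Triangle.coyoneda_exact₃ _ hT (b ≫ φ)
      ((Category.assoc _ _ _).trans (comp_distTriang_mor_zero₁₂ _ hTE))
    obtain ⟨h, rfl⟩ := hf.2 hE m
    have hfg : f ≫ g = 0 := comp_distTriang_mor_zero₁₂ _ hT
    have hm' : b ≫ φ = h ≫ f ≫ g := hm.trans (Category.assoc _ _ _)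
    rw [hm', hfg, comp_zero]
  obtain ⟨ψ, hψ⟩ := Triangle.yoneda_exact₂ _ hTE φ hbφ
  exact ⟨ψ, (Category.assoc _ _ _).symm.trans hψ.symm⟩

lemma IsPrecover.exists_forall_comp_eq_of_distTriang [P.IsClosedUnderIsomorphisms]
    [P.IsTriangulatedClosed₂] {X M Y : C} {f : X ⟶ M} {g : M ⟶ Y} {δ : Y ⟶ X⟦(1 : ℤ)⟧}
    (hT : Triangle.mk f g δ ∈ distTriang C) (hf : P.IsPrecover f) {W : C} {q : W ⟶ Y}
    (hq : P.IsPrecover q) :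
    ∃ ψ : X⟦(1 : ℤ)⟧ ⟶ Y, ∀ ⦃X' : C⦄, P X' → ∀ φ : X' ⟶ Y, φ ≫ δ ≫ ψ = φ := by
  obtain ⟨ψ, hψ⟩ := hf.exists_comp_eq_of_distTriang hT hq.1 q
  refine ⟨ψ, fun X' hX' φ => ?_⟩
  obtain ⟨t, rfl⟩ := hq.2 hX' φ
  rw [Category.assoc, hψ]

lemma exists_distTriang_rightOrthogonal [IsIdempotentComplete C] [P.IsStableUnderRetracts]
    [P.IsTriangulatedClosed₂] [P.IsStableUnderShiftBy (1 : ℤ)] (hP : P.IsPrecovering) (M : C) :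
    ∃ (X Y : C) (f : X ⟶ M) (g : M ⟶ Y) (h : Y ⟶ X⟦(1 : ℤ)⟧),
      P X ∧ P.rightOrthogonal Y ∧ Triangle.mk f g h ∈ distTriang C := by
  obtain ⟨X₀, f, hf⟩ := hP M
  obtain ⟨Y, g, δ, hT⟩ := distinguished_cocone_triangle f
  obtain ⟨W, q, hq⟩ := hP Y
  obtain ⟨ψ, hψ⟩ := IsPrecover.exists_forall_comp_eq_of_distTriang hT hf hq
  have he : (δ ≫ ψ) ≫ δ ≫ ψ = δ ≫ ψ := by
    rw [Category.assoc, hψ (P.le_shift 1 _ hf.1) ψ]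
  obtain ⟨Y₁, ρ, hρ⟩ := IsIdempotentComplete.exists_retract_comp_eq_id_sub he
  have hgδ : g ≫ δ = 0 := comp_distTriang_mor_zero₂₃ _ hT
  have hg : g ≫ ρ.r ≫ ρ.i = g := by
    rw [hρ, Preadditive.comp_sub, Category.comp_id, ← Category.assoc, hgδ, zero_comp, sub_zero]
  obtain ⟨X, a, c, hT₁⟩ := distinguished_cocone_triangle₁ (g ≫ ρ.r)
  obtain ⟨σ⟩ := nonempty_retract_obj₁ ρ hT hT₁ hg
  exact ⟨X, Y₁, a, g ≫ ρ.r, c, P.prop_of_retract σ hf.1, rightOrthogonal_of_retract ρ hψ hρ, hT₁⟩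

lemma bijective_comp_mor₁ [P.IsStableUnderShiftBy (1 : ℤ)] (T : Triangle C)
    (hT : T ∈ distTriang C) (h₃ : P.rightOrthogonal T.obj₃) {X' : C} (hX' : P X') :
    Function.Bijective (fun u : X' ⟶ T.obj₁ => u ≫ T.mor₁) := by
  refine ⟨(injective_iff_map_eq_zero (Preadditive.rightComp X' T.mor₁)).2 fun u hu => ?_,
    fun u => ?_⟩
  · obtain ⟨w, rfl⟩ := Triangle.coyoneda_exact₂ _ (inv_rot_of_distTriang _ hT) u hu
    rw [P.rightOrthogonal.le_shift (-1) _ h₃ w hX']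
    exact zero_comp
  · obtain ⟨w, rfl⟩ := Triangle.coyoneda_exact₂ _ hT u (h₃ (u ≫ T.mor₂) hX')
    exact ⟨w, rfl⟩

lemma isLeftAdjoint_ι_of_isPrecovering [IsIdempotentComplete C] [P.IsStableUnderRetracts]
    [P.IsTriangulatedClosed₂] [P.IsStableUnderShiftBy (1 : ℤ)] (hP : P.IsPrecovering) :
    P.ι.IsLeftAdjoint :=
  isLeftAdjoint_ι_of_bijective fun M => by
    obtain ⟨X, Y, f, g, h, hX, hY, hT⟩ := P.exists_distTriang_rightOrthogonal hP M
    exact ⟨X, hX, f, fun X' hX' => bijective_comp_mor₁ _ hT hY hX'⟩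

end ObjectProperty

end CategoryTheory

namespace Paper

/-- Proposition 3.6 (Neeman, Keller–Vossieck): if `𝒳` is a precovering suspended full
subcategory of a triangulated category `D` with splitting idempotents, then the inclusion
`𝒳 ↪ D` has a right adjoint, and every object `M` fits in a distinguished triangle
`X ⟶ M ⟶ Y ⟶ X⟦1⟧` with `X ∈ 𝒳` and `Y ∈ 𝒳^⊥`. -/
theorem right_adjoint_of_precovering_suspended
    {D : Type u} [Category.{v} D] [HasZeroObject D] [HasShift D ℤ] [Preadditive D]
    [∀ n : ℤ, (shiftFunctor D n).Additive] [Pretriangulated D]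
    [IsIdempotentComplete D]
    (𝒳 : Set D)
    (hshift : ∀ X ∈ 𝒳, (X⟦(1 : ℤ)⟧) ∈ 𝒳)
    (hsummand : ∀ (X M : D) (s : M ⟶ X) (r : X ⟶ M), s ≫ r = 𝟙 M → X ∈ 𝒳 → M ∈ 𝒳)
    (hext : ∀ T : Triangle D, (T ∈ distTriang D) → T.obj₁ ∈ 𝒳 → T.obj₃ ∈ 𝒳 → T.obj₂ ∈ 𝒳)
    (hprecover : ∀ M : D, ∃ X ∈ 𝒳, ∃ f : X ⟶ M,
      ∀ X' ∈ 𝒳, ∀ g : X' ⟶ M, ∃ h : X' ⟶ X, h ≫ f = g) :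
    (ObjectProperty.ι (fun X : D => X ∈ 𝒳)).IsLeftAdjoint ∧
    ∀ M : D, ∃ (X Y : D) (f : X ⟶ M) (g : M ⟶ Y) (h : Y ⟶ X⟦(1 : ℤ)⟧),
      X ∈ 𝒳 ∧ (∀ X' ∈ 𝒳, ∀ φ : X' ⟶ Y, φ = 0) ∧
        Triangle.mk f g h ∈ distTriang D := by
  let P : ObjectProperty D := fun X => X ∈ 𝒳
  have : P.IsStableUnderRetracts := ⟨fun ρ hX => hsummand _ _ ρ.i ρ.r ρ.retract hX⟩
  have : P.IsTriangulatedClosed₂ := .mk' hext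
  have : P.IsStableUnderShiftBy (1 : ℤ) := ⟨hshift⟩
  have hP : P.IsPrecovering := fun M => by
    obtain ⟨X, hX, f, hf⟩ := hprecover M
    exact ⟨X, f, hX, hf⟩
  refine ⟨P.isLeftAdjoint_ι_of_isPrecovering hP, fun M => ?_⟩
  obtain ⟨X, Y, f, g, h, hX, hY, hT⟩ := P.exists_distTriang_rightOrthogonal hP M
  exact ⟨X, Y, f, g, h, hX, fun X' hX' φ => hY φ hX', hT⟩

end Paper
end
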